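/- Let α ∈ S_n be a permutation whose disjoint nontrivial cycle factors have pairwise distinct lengths. Then the centralizer of α in S_n is the internal direct product of the cyclic groups generated by the cycle factors of α together with the pointwise stabilizer group of M(α) (the symmetric group on the fixed points of α). -/

import Mathlib

/-!
Conjugation by an element `x` of the centralizer of `α` permutes the cycle factors of `α` and
preserves their lengths; as the lengths are distinct, `x` commutes with every factor `a i`. A
permutation commuting with a cycle acts on its support as a power of that cycle, so dividing `x`
by these powers leaves a permutation fixing `M(α)` pointwise. The decomposition is unique because
on the support of `a i` only the `i`-th factor of the product acts.
-/

open Equiv.Perm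

namespace Equiv.Perm

variable {β : Type*}

theorem list_prod_apply_of_forall_apply_eq_self {l : List (Perm β)} {v : β}
    (h : ∀ g ∈ l, g v = v) : l.prod v = v := by
  induction l with
  | nil => rfl
  | cons g l ih =>
    rw [List.prod_cons, mul_apply, ih fun g hg => h g (List.mem_cons_of_mem _ hg),
      h g List.mem_cons_self]

theorem list_prod_apply_of_mem_support [DecidableEq β] [Fintype β] {l : List (Perm β)}
    (hl : l.Pairwise Disjoint) {g : Perm β} (hg : g ∈ l) {v : β} (hv : v ∈ g.support) :
    l.prod v = g v := by
  induction l with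
  | nil => simp at hg
  | cons h l ih =>
    rw [List.pairwise_cons] at hl
    rw [List.prod_cons, mul_apply]
    rcases List.mem_cons.mp hg with rfl | hg
    · rw [notMem_support.mp ((disjoint_prod_right l hl.1).mem_imp hv)]
    · rw [ih hl.2 hg, notMem_support.mp ((hl.1 g hg).symm.mem_imp (apply_mem_support.mpr hv))]

variable [DecidableEq β] [Fintype β]

theorem support_le_of_mem_zpowers {σ τ : Perm β} (h : τ ∈ Subgroup.zpowers σ) :
    τ.support ≤ σ.support := by
  obtain ⟨m, rfl⟩ := Subgroup.mem_zpowers_iff.mp h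
  exact support_zpow_le σ m

variable {k : ℕ} {a : Fin k → Perm β}

theorem prod_ofFn_apply_of_mem_zpowers (hdisj : Pairwise fun i j => (a i).Disjoint (a j))
    {b : Fin k → Perm β} (hb : ∀ i, b i ∈ Subgroup.zpowers (a i)) {i : Fin k} {v : β}
    (hv : v ∈ (a i).support) : (List.ofFn b).prod v = b i v := by
  have hsupp : ∀ j, (b j).support ≤ (a j).support := fun j => support_le_of_mem_zpowers (hb j)
  by_cases hbv : v ∈ (b i).support
  · refine list_prod_apply_of_mem_support ?_ (List.mem_ofFn.mpr ⟨i, rfl⟩) hbv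
    exact List.pairwise_ofFn.mpr fun j j' hjj' => (hdisj hjj'.ne).mono (hsupp j) (hsupp j')
  · rw [notMem_support.mp hbv]
    refine list_prod_apply_of_forall_apply_eq_self ?_
    intro g hg
    obtain ⟨j, rfl⟩ := List.mem_ofFn.mp hg
    by_cases hji : j = i
    · exact hji ▸ notMem_support.mp hbv
    · exact notMem_support.mp fun hvj => (hdisj hji).mem_imp (hsupp j hvj) hv

theorem support_le_support_prod_ofFn (hdisj : Pairwise fun i j => (a i).Disjoint (a j))
    (i : Fin k) : (a i).support ≤ (List.ofFn a).prod.support := fun v hv => by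
  rw [mem_support, prod_ofFn_apply_of_mem_zpowers hdisj (fun j => Subgroup.mem_zpowers (a j)) hv]
  exact mem_support.mp hv

theorem mem_cycleFactorsFinset_prod_ofFn_iff (hcyc : ∀ i, (a i).IsCycle)
    (hdisj : Pairwise fun i j => (a i).Disjoint (a j)) {c : Perm β} :
    c ∈ (List.ofFn a).prod.cycleFactorsFinset ↔ ∃ i, a i = c := by
  have hinj : Function.Injective a := fun i j hij => by
    by_contra hne
    have hself : (a i).Disjoint (a j) := hdisj hne
    rw [hij] at hself
    exact (hcyc j).ne_one (disjoint_refl_iff.mp hself)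
  rw [(cycleFactorsFinset_eq_list_toFinset (List.nodup_ofFn.mpr hinj)).mpr
    ⟨fun _ hc => by obtain ⟨i, rfl⟩ := List.mem_ofFn.mp hc; exact hcyc i,
      List.pairwise_ofFn.mpr fun _ _ hij => hdisj hij.ne, rfl⟩,
    List.mem_toFinset, List.mem_ofFn]

theorem commute_of_mem_cycleFactorsFinset_of_card_support {g x c : Perm β}
    (hx : Commute x g) (hc : c ∈ g.cycleFactorsFinset)
    (huniq : ∀ d ∈ g.cycleFactorsFinset, d.support.card = c.support.card → d = c) :
    Commute x c := by
  have hconj : x * c * x⁻¹ ∈ g.cycleFactorsFinset := by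
    simpa [hx.eq, mul_assoc] using (mem_cycleFactorsFinset_conj g x c).mpr hc
  exact mul_inv_eq_iff_eq_mul.mp (huniq _ hconj card_support_conj)

theorem IsCycle.exists_zpow_eq_on_support {c x : Perm β} (hc : c.IsCycle) (hx : Commute x c) :
    ∃ m : ℤ, ∀ v ∈ c.support, (c ^ m) v = x v := by
  obtain ⟨hinv, hpow⟩ := hc.commute_iff.mp hx
  obtain ⟨m, hm⟩ := Subgroup.mem_zpowers_iff.mp hpow
  exact ⟨m, fun v hv => by rw [hm, ofSubtype_subtypePerm_of_mem hinv hv]⟩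

theorem exists_mem_zpowers_disjoint_support_of_commute (hcyc : ∀ i, (a i).IsCycle)
    (hdisj : Pairwise fun i j => (a i).Disjoint (a j))
    (hlen : Pairwise fun i j => (a i).support.card ≠ (a j).support.card) {x : Perm β}
    (hx : Commute x (List.ofFn a).prod) :
    ∃ b : Fin k → Perm β, (∀ i, b i ∈ Subgroup.zpowers (a i)) ∧
      _root_.Disjoint ((List.ofFn b).prod⁻¹ * x).support (List.ofFn a).prod.support := by
  have hcomm : ∀ i, Commute x (a i) := fun i =>
    commute_of_mem_cycleFactorsFinset_of_card_support hx
      ((mem_cycleFactorsFinset_prod_ofFn_iff hcyc hdisj).mpr ⟨i, rfl⟩) fun d hd hcard => by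
        obtain ⟨j, rfl⟩ := (mem_cycleFactorsFinset_prod_ofFn_iff hcyc hdisj).mp hd
        by_cases hji : j = i
        · rw [hji]
        · exact absurd hcard (hlen hji)
  choose m hm using fun i => (hcyc i).exists_zpow_eq_on_support (hcomm i)
  have hb : ∀ i, a i ^ m i ∈ Subgroup.zpowers (a i) := fun i => Subgroup.zpow_mem_zpowers _ _
  refine ⟨fun i => a i ^ m i, hb, Finset.disjoint_right.mpr fun v hv => ?_⟩
  obtain ⟨i, hi⟩ := (mem_cycleFactorsFinset_prod_ofFn_iff hcyc hdisj).mp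
    (cycleOf_mem_cycleFactorsFinset_iff.mpr hv)
  have hvi : v ∈ (a i).support := hi ▸ mem_support_cycleOf_iff.mpr ⟨SameCycle.refl _ _, hv⟩
  rw [notMem_support, mul_apply, inv_eq_iff_eq, prod_ofFn_apply_of_mem_zpowers hdisj hb hvi,
    hm i v hvi]

theorem eq_and_eq_of_prod_ofFn_mul_eq (hdisj : Pairwise fun i j => (a i).Disjoint (a j))
    {b b' : Fin k → Perm β} {c c' : Perm β} (hb : ∀ i, b i ∈ Subgroup.zpowers (a i))
    (hb' : ∀ i, b' i ∈ Subgroup.zpowers (a i))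
    (hc : _root_.Disjoint c.support (List.ofFn a).prod.support)
    (hc' : _root_.Disjoint c'.support (List.ofFn a).prod.support)
    (h : (List.ofFn b).prod * c = (List.ofFn b').prod * c') : b = b' ∧ c = c' := by
  have hbb' : b = b' := by
    funext i
    ext v
    by_cases hv : v ∈ (a i).support
    · have hvα := support_le_support_prod_ofFn hdisj i hv
      have := Perm.congr_fun h v
      rwa [mul_apply, mul_apply, notMem_support.mp (Finset.disjoint_right.mp hc hvα),
        notMem_support.mp (Finset.disjoint_right.mp hc' hvα),
        prod_ofFn_apply_of_mem_zpowers hdisj hb hv,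
        prod_ofFn_apply_of_mem_zpowers hdisj hb' hv] at this
    · rw [notMem_support.mp fun hw => hv (support_le_of_mem_zpowers (hb i) hw),
        notMem_support.mp fun hw => hv (support_le_of_mem_zpowers (hb' i) hw)]
  subst hbb'
  exact ⟨rfl, mul_left_cancel h⟩

theorem commute_prod_ofFn_mul (hdisj : Pairwise fun i j => (a i).Disjoint (a j))
    {b : Fin k → Perm β} {c : Perm β} (hb : ∀ i, b i ∈ Subgroup.zpowers (a i))
    (hc : _root_.Disjoint c.support (List.ofFn a).prod.support) :
    Commute ((List.ofFn b).prod * c) (List.ofFn a).prod := by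
  have hprod : Commute (List.ofFn b).prod (List.ofFn a).prod := by
    refine Commute.list_prod_left _ _ fun g hg => Commute.list_prod_right _ _ fun g' hg' => ?_
    obtain ⟨i, rfl⟩ := List.mem_ofFn.mp hg
    obtain ⟨j, rfl⟩ := List.mem_ofFn.mp hg'
    obtain ⟨m, hm⟩ := Subgroup.mem_zpowers_iff.mp (hb i)
    rw [← hm]
    by_cases hij : i = j
    · exact hij ▸ (Commute.refl (a i)).zpow_left m
    · exact (hdisj hij).commute.zpow_left m
  exact hprod.mul_left (disjoint_iff_disjoint_support.mpr hc).commute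

end Equiv.Perm

/-- If the disjoint nontrivial cycle factors of α have pairwise distinct lengths,
then the centralizer of α is the internal direct product of the cyclic groups
generated by the factors and the symmetric group on the fixed points of α:
every centralizing element is uniquely a product (∏ powers of the factors) · b
with b supported off M(α). -/
theorem stmt_18 {n k : ℕ} (a : Fin k → Equiv.Perm (Fin n))
    (hcyc : ∀ i, (a i).IsCycle)
    (hdisj : ∀ i j, i ≠ j → (a i).Disjoint (a j))
    (hlen : ∀ i j, i ≠ j → (a i).support.card ≠ (a j).support.card)
    (α : Equiv.Perm (Fin n)) (hα : α = (List.ofFn a).prod) :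
    ∀ x : Equiv.Perm (Fin n),
      x ∈ Subgroup.centralizer ({α} : Set (Equiv.Perm (Fin n))) ↔
      ∃! p : (Fin k → Equiv.Perm (Fin n)) × Equiv.Perm (Fin n),
        (∀ i, p.1 i ∈ Subgroup.zpowers (a i)) ∧
        Disjoint p.2.support α.support ∧
        x = (List.ofFn p.1).prod * p.2 := by
  intro x
  subst hα
  rw [Subgroup.mem_centralizer_singleton_iff]
  constructor
  · intro hx
    obtain ⟨b, hb, hc⟩ := exists_mem_zpowers_disjoint_support_of_commute hcyc hdisj hlen hx
    refine ⟨(b, (List.ofFn b).prod⁻¹ * x), ⟨hb, hc, (mul_inv_cancel_left _ _).symm⟩, ?_⟩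
    rintro p ⟨hb', hc', hx'⟩
    obtain ⟨h1, h2⟩ := eq_and_eq_of_prod_ofFn_mul_eq hdisj hb' hb hc' hc
      (by rw [mul_inv_cancel_left, hx'])
    exact Prod.ext h1 h2
  · rintro ⟨⟨b, c⟩, ⟨hb, hc, rfl⟩, -⟩
    exact commute_prod_ofFn_mul hdisj hb hc
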